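/- Fundamental theorem of Hopf modules: If M is a right Hopf module over a finitely generated projective Hopf k-algebra H, then M ≅ P(M) ⊗_k H as Hopf modules, where P(M) = {m ∈ M : χ(m) = m ⊗ 1} is the submodule of coinvariants, and P(M) is a k-direct summand of M. -/

import Mathlib

/-!
The map `E m = ∑ m₀ • S(m₁)` is a projection of `M` onto its coinvariants `P(M)`: it fixes
`P(M)`, and `E m` is coinvariant because the antipode is an anti-coalgebra map,
`Δ ∘ S = (S ⊗ S) ∘ τ ∘ Δ` (both sides are convolution inverses of `Δ`, one on each side).
Then `m ↦ ∑ E(m₀) ⊗ m₁` and `x ⊗ h ↦ x • h` are mutually inverse; the latter is visibly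
`H`-linear and `H`-colinear, hence so is the former.
-/

open scoped TensorProduct

section Antipode

open TensorProduct Coalgebra HopfAlgebra WithConv LinearMap
open scoped RingTheory.LinearMap

variable {k H : Type*} [CommRing k] [Ring H] [HopfAlgebra k H]

lemma LinearMap.comul_left_inv :
    toConv (map (antipode k) (antipode k) ∘ₗ (TensorProduct.comm k H H).toLinearMap ∘ₗ δ) *
      toConv δ = 1 := by
  have antipode_mul : mul' k H ∘ₗ (antipode k ⊗ₘ LinearMap.id) ∘ₗ δ = Algebra.linearMap k H ∘ₗ ε :=
    mul_antipode_rTensor_comul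
  have counit_left (g : H ⊗[k] H →ₗ[k] H) (x : H ⊗[k] H) :
      (Algebra.linearMap k H ∘ₗ ε ⊗ₘ g) (TensorProduct.assoc k H H H ((δ ⊗ₘ LinearMap.id) x)) =
        1 ⊗ₜ g x := by
    induction x using TensorProduct.induction_on with
    | zero => simp
    | add x y hx hy => simp [hx, hy, tmul_add]
    | tmul a b =>
      rw [map_tmul, ← (ℛ k a).eq]
      simp only [sum_tmul, map_sum, assoc_tmul, map_tmul, LinearMap.comp_apply,
        Algebra.linearMap_apply, Algebra.algebraMap_eq_smul_one, LinearMap.id_apply, smul_tmul,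
        ← tmul_sum]
      conv_rhs => rw [← sum_counit_smul (ℛ k a)]
      simp only [sum_tmul, map_sum, ← smul_tmul', map_smul]
  apply WithConv.ext
  simp only [convMul_def, convOne_def, ofConv_toConv, mul'_tensor]
  simp only [coassoc_simps]
  rw [antipode_mul]
  ext a
  have antipode_mul_apply := LinearMap.congr_fun antipode_mul a
  simp only [LinearMap.comp_apply] at antipode_mul_apply
  simp only [LinearMap.comp_apply, LinearEquiv.coe_coe, counit_left, comm_comm, antipode_mul_apply]
  simp [Algebra.TensorProduct.one_def, Algebra.algebraMap_eq_smul_one]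

namespace HopfAlgebra

lemma comul_comp_antipode :
    δ ∘ₗ antipode k = map (antipode k) (antipode k) ∘ₗ (TensorProduct.comm k H H).toLinearMap ∘ₗ
      (δ : H →ₗ[k] H ⊗[k] H) :=
  congrArg ofConv
    (left_inv_eq_right_inv (M := WithConv (H →ₗ[k] H ⊗[k] H)) comul_left_inv comul_right_inv).symm

lemma comul_antipode {ι : Type*} {a : H} (r : Repr k a ι) :
    δ (antipode k a) = ∑ i ∈ r.index, antipode k (r.right i) ⊗ₜ[k] antipode k (r.left i) := by
  rw [← LinearMap.comp_apply (δ : H →ₗ[k] H ⊗[k] H), comul_comp_antipode]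
  simp [← r.eq]

/-- In Sweedler notation: `∑ S(h₃) ⊗ h₁ S(h₂) = S(h) ⊗ 1`. -/
lemma sum_antipode_tmul_mul_antipode {ι κ : Type*} {h : H} (r : Repr k h ι)
    (r₂ : (i : ι) → Repr k (r.right i) κ) :
    ∑ i ∈ r.index, ∑ j ∈ (r₂ i).index,
      antipode k ((r₂ i).right j) ⊗ₜ[k] (r.left i * antipode k ((r₂ i).left j)) =
      antipode k h ⊗ₜ[k] 1 := by
  let T : H ⊗[k] (H ⊗[k] H) →ₗ[k] H ⊗[k] H :=
    map (antipode k) (mul' k H ∘ₗ lTensor H (antipode k)) ∘ₗ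
      (TensorProduct.comm k (H ⊗[k] H) H).toLinearMap ∘ₗ
      (TensorProduct.assoc k H H H).symm.toLinearMap
  have coassoc := congrArg T (sum_tmul_tmul_eq r (fun i => ℛ k (r.left i)) r₂)
  simp only [T, map_sum, LinearMap.comp_apply, LinearEquiv.coe_coe, assoc_symm_tmul, comm_tmul,
    map_tmul, lTensor_tmul, mul'_apply] at coassoc
  rw [← coassoc]
  simp only [← tmul_sum, sum_mul_antipode_eq_smul, ← smul_tmul, ← sum_tmul, ← map_smul, ← map_sum,
    sum_counit_smul]

end HopfAlgebra

end Antipode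

namespace HopfModule

open TensorProduct Coalgebra HopfAlgebra LinearMap

variable {k H M : Type*} [CommRing k] [Ring H] [HopfAlgebra k H] [AddCommGroup M] [Module k M]
variable (act : M →ₗ[k] H →ₗ[k] M) (ρ : M →ₗ[k] M ⊗[k] H)

structure IsRightModule : Prop where
  act_one : ∀ m : M, act m 1 = m
  act_mul : ∀ (m : M) (g h : H), act (act m g) h = act m (g * h)

structure IsComodule : Prop where
  counit : ∀ m : M, TensorProduct.rid k M (lTensor M (counit (R := k)) (ρ m)) = m
  coassoc : ∀ m : M,
    TensorProduct.assoc k M H H (rTensor H ρ (ρ m)) = lTensor M (comul (R := k)) (ρ m)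

def IsCompatible : Prop :=
  ∀ (m : M) (h : H), ρ (act m h) =
    homTensorHomMap (RingHom.id k) M H M H
      (map act.flip (LinearMap.mul k H).flip (comul (R := k) h)) (ρ m)

def coinvariants : Submodule k M :=
  ker (ρ - (TensorProduct.mk k M H).flip 1)

variable {ρ} in
lemma mem_coinvariants {x : M} : x ∈ coinvariants ρ ↔ ρ x = x ⊗ₜ 1 := by
  rw [coinvariants, mem_ker, LinearMap.sub_apply, sub_eq_zero]
  rfl

noncomputable def coinvariantProj : M →ₗ[k] M :=
  lift act ∘ₗ lTensor M (antipode k) ∘ₗ ρ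

variable {act ρ}

lemma IsRightModule.lift_rTensor_lift (hact : IsRightModule act) (w : (M ⊗[k] H) ⊗[k] H) :
    lift act (rTensor H (lift act) w) =
      lift act (lTensor M (mul' k H) (TensorProduct.assoc k M H H w)) := by
  induction w using TensorProduct.induction_on with
  | zero => simp
  | add v w hv hw => simp only [map_add, hv, hw]
  | tmul v h =>
    induction v using TensorProduct.induction_on with
    | zero => simp
    | add u v hu hv => simp only [add_tmul, map_add, hu, hv]
    | tmul m g => simp [hact.act_mul]

lemma IsRightModule.lift_lTensor_algebraMap (hact : IsRightModule act) (w : M ⊗[k] k) :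
    lift act (lTensor M (Algebra.linearMap k H) w) = TensorProduct.rid k M w := by
  induction w using TensorProduct.induction_on with
  | zero => simp
  | add v w hv hw => simp only [map_add, hv, hw]
  | tmul m r => simp [Algebra.algebraMap_eq_smul_one, hact.act_one]

lemma IsRightModule.lift_rTensor_act (hact : IsRightModule act) (x : M) (w : H ⊗[k] H) :
    lift act (rTensor H (act x) w) = act x (mul' k H w) := by
  induction w using TensorProduct.induction_on with
  | zero => simp
  | add v w hv hw => simp only [map_add, hv, hw]
  | tmul g h => simp [hact.act_mul]

lemma IsCompatible.rho_act (hc : IsCompatible act ρ) (m : M) (h : H) :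
    ρ (act m h) = map (lift act) (mul' k H)
      (tensorTensorTensorComm k M H H H (ρ m ⊗ₜ comul (R := k) h)) := by
  rw [hc m h]
  induction ρ m using TensorProduct.induction_on with
  | zero => simp
  | add v w hv hw => simp only [map_add, add_tmul, hv, hw]
  | tmul x a =>
    induction comul (R := k) h using TensorProduct.induction_on with
    | zero => simp
    | add v w hv hw => simp only [map_add, tmul_add, LinearMap.add_apply, hv, hw]
    | tmul b c => simp

lemma IsCompatible.rho_act_of_mem (hc : IsCompatible act ρ) {x : M} (hx : x ∈ coinvariants ρ)
    (h : H) : ρ (act x h) = rTensor H (act x) (comul (R := k) h) := by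
  rw [hc.rho_act, mem_coinvariants.1 hx]
  induction comul (R := k) h using TensorProduct.induction_on with
  | zero => simp
  | add v w hv hw => simp only [map_add, tmul_add, hv, hw]
  | tmul b c => simp

lemma coinvariantProj_of_mem (hact : IsRightModule act) {x : M} (hx : x ∈ coinvariants ρ) :
    coinvariantProj act ρ x = x := by
  simp [coinvariantProj, mem_coinvariants.1 hx, hact.act_one]

lemma coinvariantProj_act_of_mem (hact : IsRightModule act) (hc : IsCompatible act ρ) {x : M}
    (hx : x ∈ coinvariants ρ) (h : H) :
    coinvariantProj act ρ (act x h) = counit (R := k) h • x := by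
  rw [coinvariantProj, LinearMap.comp_apply, LinearMap.comp_apply, hc.rho_act_of_mem hx,
    ← LinearMap.comp_apply (lTensor M _), lTensor_comp_rTensor, ← rTensor_comp_lTensor,
    LinearMap.comp_apply, hact.lift_rTensor_act, mul_antipode_lTensor_comul_apply, Algebra.algebraMap_eq_smul_one,
    map_smul, hact.act_one]

lemma coinvariantProj_mem (hρ : IsComodule ρ) (hc : IsCompatible act ρ) (m : M) :
    coinvariantProj act ρ m ∈ coinvariants ρ := by
  let Φ : (M ⊗[k] H) ⊗[k] (H ⊗[k] H) →ₗ[k] M ⊗[k] H :=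
    map (lift act) (mul' k H) ∘ₗ (tensorTensorTensorComm k M H H H).toLinearMap
  have rho_lift : ρ ∘ₗ lift act ∘ₗ lTensor M (antipode k) =
      Φ ∘ₗ lTensor (M ⊗[k] H) (comul ∘ₗ antipode k) ∘ₗ rTensor H ρ :=
    ext' fun x h => by simp [Φ, hc.rho_act]
  -- `∑ x • S(h₃) ⊗ h₁ S(h₂) = x • S(h) ⊗ 1`
  have sweedler : Φ ∘ₗ lTensor (M ⊗[k] H) (comul ∘ₗ antipode k) ∘ₗ
      (TensorProduct.assoc k M H H).symm.toLinearMap ∘ₗ lTensor M comul =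
      (TensorProduct.mk k M H).flip 1 ∘ₗ lift act ∘ₗ lTensor M (antipode k) := by
    refine ext' fun x h => ?_
    simp only [LinearMap.comp_apply, lTensor_tmul]
    rw [← (ℛ k h).eq]
    simp only [Φ, tmul_sum, map_sum, comul_antipode (ℛ k _), LinearMap.comp_apply,
      assoc_symm_tmul, lTensor_tmul, LinearEquiv.coe_coe, tensorTensorTensorComm_tmul, map_tmul,
      lift.tmul, mul'_apply, mk_apply, flip_apply]
    rw [← rTensor_tmul H (act x), ← sum_antipode_tmul_mul_antipode (ℛ k h) (fun i => ℛ k _)]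
    simp only [map_sum, rTensor_tmul]
  have coassoc : (TensorProduct.assoc k M H H).symm (lTensor M comul (ρ m)) = rTensor H ρ (ρ m) :=
    (LinearEquiv.symm_apply_eq _).2 (hρ.coassoc m).symm
  rw [mem_coinvariants]
  calc ρ (coinvariantProj act ρ m)
      = (Φ ∘ₗ lTensor (M ⊗[k] H) (comul ∘ₗ antipode k) ∘ₗ rTensor H ρ) (ρ m) := by
        rw [← rho_lift]; rfl
    _ = (Φ ∘ₗ lTensor (M ⊗[k] H) (comul ∘ₗ antipode k) ∘ₗ
          (TensorProduct.assoc k M H H).symm.toLinearMap ∘ₗ lTensor M comul) (ρ m) := by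
        simp only [LinearMap.comp_apply, LinearEquiv.coe_coe, coassoc]
    _ = coinvariantProj act ρ m ⊗ₜ 1 := by rw [sweedler]; rfl

lemma lift_comp_coinvariantProj_rho (hact : IsRightModule act) (hρ : IsComodule ρ) (m : M) :
    lift (act ∘ₗ coinvariantProj act ρ) (ρ m) = m := by
  have lift_comp : lift (act ∘ₗ coinvariantProj act ρ) =
      lift act ∘ₗ rTensor H (lift act) ∘ₗ rTensor H (lTensor M (antipode k)) ∘ₗ rTensor H ρ :=
    ext' fun x h => rfl
  calc lift (act ∘ₗ coinvariantProj act ρ) (ρ m)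
      = lift act (lTensor M (mul' k H) (TensorProduct.assoc k M H H
          (rTensor H (lTensor M (antipode k)) (rTensor H ρ (ρ m))))) := by
        rw [lift_comp]; exact hact.lift_rTensor_lift _
    _ = lift act (lTensor M (mul' k H ∘ₗ rTensor H (antipode k) ∘ₗ comul) (ρ m)) := by
        have assoc_nat := LinearMap.congr_fun
          (lTensor_rTensor_comp_assoc (P := M) (Q := H) (x := antipode k)) (rTensor H ρ (ρ m))
        simp only [LinearMap.comp_apply, LinearEquiv.coe_coe] at assoc_nat
        rw [← assoc_nat, hρ.coassoc]
        simp only [lTensor_comp, LinearMap.comp_apply]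
    _ = TensorProduct.rid k M (lTensor M (counit (R := k)) (ρ m)) := by
        rw [mul_antipode_rTensor_comul, lTensor_comp, LinearMap.comp_apply,
          hact.lift_lTensor_algebraMap]
    _ = m := hρ.counit m

noncomputable def toCoinvariants (hρ : IsComodule ρ) (hc : IsCompatible act ρ) :
    M →ₗ[k] coinvariants ρ :=
  (coinvariantProj act ρ).codRestrict _ (coinvariantProj_mem hρ hc)

lemma toCoinvariants_coe (hact : IsRightModule act) (hρ : IsComodule ρ) (hc : IsCompatible act ρ)
    (x : coinvariants ρ) : toCoinvariants hρ hc x = x :=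
  Subtype.ext (coinvariantProj_of_mem hact x.2)

variable (act ρ) in
noncomputable def actCoinvariants : coinvariants ρ ⊗[k] H →ₗ[k] M :=
  lift (act ∘ₗ (coinvariants ρ).subtype)

lemma actCoinvariants_comp_rTensor (hact : IsRightModule act) (hρ : IsComodule ρ)
    (hc : IsCompatible act ρ) :
    actCoinvariants act ρ ∘ₗ rTensor H (toCoinvariants hρ hc) ∘ₗ ρ = LinearMap.id := by
  have : actCoinvariants act ρ ∘ₗ rTensor H (toCoinvariants hρ hc) =
      lift (act ∘ₗ coinvariantProj act ρ) := ext' fun _ _ => rfl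
  ext m
  rw [← LinearMap.comp_assoc, this, LinearMap.comp_apply,
    lift_comp_coinvariantProj_rho hact hρ, LinearMap.id_apply]

lemma rTensor_comp_actCoinvariants (hact : IsRightModule act) (hρ : IsComodule ρ)
    (hc : IsCompatible act ρ) :
    rTensor H (toCoinvariants hρ hc) ∘ₗ ρ ∘ₗ actCoinvariants act ρ = LinearMap.id := by
  refine ext' fun x h => ?_
  have proj_act : toCoinvariants hρ hc ∘ₗ act x = toSpanSingleton k _ x ∘ₗ counit :=
    LinearMap.ext fun g => Subtype.ext (coinvariantProj_act_of_mem hact hc x.2 g)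
  simp only [LinearMap.comp_apply, actCoinvariants, lift.tmul, Submodule.subtype_apply,
    hc.rho_act_of_mem x.2, ← rTensor_comp_apply, proj_act]
  rw [rTensor_comp_apply, rTensor_counit_comul, rTensor_tmul, toSpanSingleton_apply, one_smul,
    LinearMap.id_apply]

noncomputable def coinvariantsTensorEquiv (hact : IsRightModule act) (hρ : IsComodule ρ)
    (hc : IsCompatible act ρ) : coinvariants ρ ⊗[k] H ≃ₗ[k] M :=
  .ofLinearMap (actCoinvariants act ρ) (rTensor H (toCoinvariants hρ hc) ∘ₗ ρ)
    (actCoinvariants_comp_rTensor hact hρ hc) (rTensor_comp_actCoinvariants hact hρ hc)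

lemma actCoinvariants_lTensor_mul (hact : IsRightModule act) (y : coinvariants ρ ⊗[k] H) (h : H) :
    actCoinvariants act ρ (lTensor _ ((LinearMap.mul k H).flip h) y) =
      act (actCoinvariants act ρ y) h := by
  induction y using TensorProduct.induction_on with
  | zero => simp
  | add y z hy hz => simp only [map_add, LinearMap.add_apply, hy, hz]
  | tmul x g => simp [actCoinvariants, hact.act_mul]

lemma rho_actCoinvariants (hc : IsCompatible act ρ) (y : coinvariants ρ ⊗[k] H) :
    ρ (actCoinvariants act ρ y) = rTensor H (actCoinvariants act ρ)
      ((TensorProduct.assoc k _ H H).symm (lTensor _ (comul (R := k)) y)) := by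
  induction y using TensorProduct.induction_on with
  | zero => simp
  | add y z hy hz => simp only [map_add, hy, hz]
  | tmul x h =>
    rw [lTensor_tmul, actCoinvariants, lift.tmul, LinearMap.comp_apply, Submodule.subtype_apply,
      hc.rho_act_of_mem x.2]
    induction comul (R := k) h using TensorProduct.induction_on with
    | zero => simp
    | add v w hv hw => simp only [map_add, tmul_add, hv, hw]
    | tmul a b => simp

lemma coinvariantsTensorEquiv_symm_act (hact : IsRightModule act) (hρ : IsComodule ρ)
    (hc : IsCompatible act ρ) (m : M) (h : H) :
    (coinvariantsTensorEquiv hact hρ hc).symm (act m h) =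
      lTensor _ ((LinearMap.mul k H).flip h) ((coinvariantsTensorEquiv hact hρ hc).symm m) := by
  set e := coinvariantsTensorEquiv hact hρ hc
  rw [e.symm_apply_eq]
  exact (congrArg (act · h) (e.apply_symm_apply m)).symm.trans
    (actCoinvariants_lTensor_mul hact (e.symm m) h).symm

lemma rTensor_coinvariantsTensorEquiv_symm_rho (hact : IsRightModule act) (hρ : IsComodule ρ)
    (hc : IsCompatible act ρ) (m : M) :
    rTensor H (coinvariantsTensorEquiv hact hρ hc).symm.toLinearMap (ρ m) =
      (TensorProduct.assoc k _ H H).symm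
        (lTensor _ (comul (R := k)) ((coinvariantsTensorEquiv hact hρ hc).symm m)) := by
  set e := coinvariantsTensorEquiv hact hρ hc
  have e_symm_comp : (e.symm : M →ₗ[k] _) ∘ₗ actCoinvariants act ρ = LinearMap.id :=
    LinearMap.ext e.symm_apply_apply
  conv_lhs => rw [← e.apply_symm_apply m]
  change rTensor H _ (ρ (actCoinvariants act ρ (e.symm m))) = _
  rw [rho_actCoinvariants hc, ← rTensor_comp_apply, e_symm_comp, rTensor_id_apply]

end HopfModule

theorem fundamental_theorem_hopf_modules (k H M : Type*) [CommRing k] [Ring H]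
    [HopfAlgebra k H]
    [AddCommGroup M] [Module k M]
    (act : M →ₗ[k] H →ₗ[k] M)
    (hact_one : ∀ m : M, act m 1 = m)
    (hact_mul : ∀ (m : M) (g h : H), act (act m g) h = act m (g * h))
    (ρ : M →ₗ[k] M ⊗[k] H)
    (hcounit : ∀ m : M,
      (TensorProduct.rid k M) ((LinearMap.lTensor M (Coalgebra.counit (R := k))) (ρ m)) = m)
    (hcoassoc : ∀ m : M,
      (TensorProduct.assoc k M H H) ((LinearMap.rTensor H ρ) (ρ m)) =
        (LinearMap.lTensor M (Coalgebra.comul (R := k))) (ρ m))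
    (hcompat : ∀ (m : M) (h : H),
      ρ (act m h) =
        (TensorProduct.homTensorHomMap (RingHom.id k) M H M H)
          ((TensorProduct.map act.flip (LinearMap.mul k H).flip)
            (Coalgebra.comul (R := k) h)) (ρ m)) :
    ∃ (β : M ≃ₗ[k] (↥(LinearMap.ker (ρ - (TensorProduct.mk k M H).flip 1)) ⊗[k] H))
      (π : M →ₗ[k] ↥(LinearMap.ker (ρ - (TensorProduct.mk k M H).flip 1))),
      (∀ x : ↥(LinearMap.ker (ρ - (TensorProduct.mk k M H).flip 1)), π ↑x = x) ∧
      (∀ (m : M) (h : H),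
        β (act m h) =
          (LinearMap.lTensor (↥(LinearMap.ker (ρ - (TensorProduct.mk k M H).flip 1)))
            ((LinearMap.mul k H).flip h)) (β m)) ∧
      (∀ m : M,
        (LinearMap.rTensor H (β : M →ₗ[k] _)) (ρ m) =
          (TensorProduct.assoc k _ H H).symm
            ((LinearMap.lTensor (↥(LinearMap.ker (ρ - (TensorProduct.mk k M H).flip 1)))
              (Coalgebra.comul (R := k))) (β m))) := by
  have hact : HopfModule.IsRightModule act := ⟨hact_one, hact_mul⟩
  have hρ : HopfModule.IsComodule ρ := ⟨hcounit, hcoassoc⟩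
  exact ⟨(HopfModule.coinvariantsTensorEquiv hact hρ hcompat).symm,
    HopfModule.toCoinvariants hρ hcompat,
    HopfModule.toCoinvariants_coe hact hρ hcompat,
    HopfModule.coinvariantsTensorEquiv_symm_act hact hρ hcompat,
    HopfModule.rTensor_coinvariantsTensorEquiv_symm_rho hact hρ hcompat⟩
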